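/- arXiv:2312.05232 — 2 statements merged into one kernel-verified Lean document; each statement's English description precedes it below -/
import Mathlib

section
/- If M is a symmetric positive definite matrix and K is any square matrix of the same size, then the corrected filter K_corr = K - (1·1ᵀ/(1ᵀM1))·M·(K - I) is conservative, i.e., 1ᵀ M K_corr v = 1ᵀ M v for every vector v. -/
open Matrix

/-! With `r := uᵀ M`, the correction term `(1 / (r u)) u uᵀ M (K - 1)` is chosen so that
`r` applied to it returns exactly `r (K - 1)`; hence `r K_corr = r K - r (K - 1) = r`,
i.e. `uᵀ M` is a left fixed vector of `K_corr`. Positive definiteness only serves to make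
`r u = uᵀ M u` nonzero when `u ≠ 0`. -/

namespace Matrix

variable {ι 𝕜 : Type*} [Fintype ι] [DecidableEq ι] [Field 𝕜]

def conservativeCorrection (M K : Matrix ι ι 𝕜) (u : ι → 𝕜) : Matrix ι ι 𝕜 :=
  K - ((1 / (u ⬝ᵥ M *ᵥ u)) • vecMulVec u u) * (M * (K - 1))

variable {M K : Matrix ι ι 𝕜} {u : ι → 𝕜}

theorem vecMul_conservativeCorrection (h : u ⬝ᵥ M *ᵥ u ≠ 0) :
    (u ᵥ* M) ᵥ* conservativeCorrection M K u = u ᵥ* M := by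
  rw [conservativeCorrection, vecMul_sub, ← vecMul_vecMul, vecMul_smul, vecMul_vecMulVec,
    ← dotProduct_mulVec, smul_smul, one_div_mul_cancel h, one_smul, ← vecMul_vecMul,
    vecMul_sub, vecMul_one, sub_sub_cancel]

theorem dotProduct_mulVec_conservativeCorrection_mulVec (h : u ⬝ᵥ M *ᵥ u ≠ 0)
    (v : ι → 𝕜) : u ⬝ᵥ M *ᵥ (conservativeCorrection M K u *ᵥ v) = u ⬝ᵥ M *ᵥ v := by
  rw [dotProduct_mulVec, dotProduct_mulVec, vecMul_conservativeCorrection h, dotProduct_mulVec]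

end Matrix

theorem stmt0_general {n : ℕ} (M K : Matrix (Fin n) (Fin n) ℝ)
    (hM : M.PosDef)
    (ones : Fin n → ℝ)
    (Kcorr : Matrix (Fin n) (Fin n) ℝ)
    (hKcorr : Kcorr =
      K - ((1 / (ones ⬝ᵥ M *ᵥ ones)) • vecMulVec ones ones) * (M * (K - 1))) :
    ∀ v : Fin n → ℝ, ones ⬝ᵥ M *ᵥ (Kcorr *ᵥ v) = ones ⬝ᵥ M *ᵥ v := by
  intro v
  subst hKcorr
  rcases eq_or_ne ones 0 with rfl | hones
  · simp
  · have hpos : 0 < ones ⬝ᵥ M *ᵥ ones := by simpa using hM.dotProduct_mulVec_pos hones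
    exact dotProduct_mulVec_conservativeCorrection_mulVec hpos.ne' v

/-- The volume-weighted conservative correction of an arbitrary filter matrix `K`
is conservative: `1ᵀ M K_corr v = 1ᵀ M v` for every vector `v`. -/
theorem stmt0 {n : ℕ} (hn : 1 ≤ n) (M K : Matrix (Fin n) (Fin n) ℝ)
    (hM : M.PosDef)
    (ones : Fin n → ℝ) (hones : ones = fun _ => 1)
    (Kcorr : Matrix (Fin n) (Fin n) ℝ)
    (hKcorr : Kcorr =
      K - ((1 / (ones ⬝ᵥ M *ᵥ ones)) • vecMulVec ones ones) * (M * (K - 1))) :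
    ∀ v : Fin n → ℝ, ones ⬝ᵥ M *ᵥ (Kcorr *ᵥ v) = ones ⬝ᵥ M *ᵥ v :=
  stmt0_general M K hM ones Kcorr hKcorr
end

section
/- For an s-stage Runge–Kutta method applied to u' = f(u,t), the update u^{n+1} = uⁿ + Δt Σ_j b_j f_j in an inner product space satisfies ‖u^{n+1}‖² - ‖uⁿ‖² = 2Δt Σ_j b_j ⟨y_j, f_j⟩ - 2Δt² Σ_{i,j} b_i a_{ij} ⟨f_j, f_i⟩ + Δt² Σ_{i,j} b_i b_j ⟨f_i, f_j⟩, where y_i = uⁿ + Δt Σ_j a_{ij} f_j are the stage values. -/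
open RealInnerProductSpace Finset

section

variable {V : Type*} [NormedAddCommGroup V] [InnerProductSpace ℝ V] {ι : Type*} [Fintype ι]

theorem norm_add_smul_sq_sub_norm_sq (u w : V) (t : ℝ) :
    ‖u + t • w‖ ^ 2 - ‖u‖ ^ 2 = 2 * t * ⟪u, w⟫ + t ^ 2 * ‖w‖ ^ 2 := by
  rw [norm_add_sq_real, norm_smul, real_inner_smul_right, mul_pow, Real.norm_eq_abs, sq_abs]
  ring

theorem real_inner_sum_smul_right (v : V) (c : ι → ℝ) (f : ι → V) :
    ⟪v, ∑ j, c j • f j⟫ = ∑ j, c j * ⟪v, f j⟫ := by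
  simp only [inner_sum, real_inner_smul_right]

theorem real_inner_sum_smul_left (c : ι → ℝ) (f : ι → V) (v : V) :
    ⟪∑ j, c j • f j, v⟫ = ∑ j, c j * ⟪f j, v⟫ := by
  simp only [sum_inner, real_inner_smul_left]

theorem norm_sum_smul_sq (c : ι → ℝ) (f : ι → V) :
    ‖∑ i, c i • f i‖ ^ 2 = ∑ i, ∑ j, c i * c j * ⟪f i, f j⟫ := by
  rw [← real_inner_self_eq_norm_sq, real_inner_sum_smul_left]
  simp only [real_inner_sum_smul_right, mul_sum, mul_assoc]

end

theorem stmt8_general {V : Type*} [NormedAddCommGroup V] [InnerProductSpace ℝ V]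
    {s : ℕ}
    (un : V) (Δt : ℝ) (a : Fin s → Fin s → ℝ) (b : Fin s → ℝ) (f : Fin s → V)
    (y : Fin s → V) (hy : ∀ i, y i = un + Δt • ∑ j, a i j • f j)
    (unext : V) (hunext : unext = un + Δt • ∑ j, b j • f j) :
    ‖unext‖ ^ 2 - ‖un‖ ^ 2 =
      2 * Δt * ∑ j, b j * ⟪y j, f j⟫
      - 2 * Δt ^ 2 * ∑ i, ∑ j, b i * a i j * ⟪f j, f i⟫
      + Δt ^ 2 * ∑ i, ∑ j, b i * b j * ⟪f i, f j⟫ := by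
  have stage (j : Fin s) : ⟪un, f j⟫ = ⟪y j, f j⟫ - Δt * ∑ k, a j k * ⟪f k, f j⟫ := by
    rw [hy, inner_add_left, real_inner_smul_left, real_inner_sum_smul_left]
    ring
  rw [hunext, norm_add_smul_sq_sub_norm_sq, norm_sum_smul_sq, real_inner_sum_smul_right]
  simp only [stage, mul_sub, sum_sub_distrib, mul_sum]
  ring_nf

/-- Energy change identity for a Runge–Kutta step in an inner product space. -/
theorem stmt8 {V : Type*} [NormedAddCommGroup V] [InnerProductSpace ℝ V]
    {s : ℕ} (hs : 1 ≤ s)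
    (un : V) (Δt : ℝ) (a : Fin s → Fin s → ℝ) (b : Fin s → ℝ) (f : Fin s → V)
    (y : Fin s → V) (hy : ∀ i, y i = un + Δt • ∑ j, a i j • f j)
    (unext : V) (hunext : unext = un + Δt • ∑ j, b j • f j) :
    ‖unext‖ ^ 2 - ‖un‖ ^ 2 =
      2 * Δt * ∑ j, b j * ⟪y j, f j⟫
      - 2 * Δt ^ 2 * ∑ i, ∑ j, b i * a i j * ⟪f j, f i⟫
      + Δt ^ 2 * ∑ i, ∑ j, b i * b j * ⟪f i, f j⟫ :=
  stmt8_general un Δt a b f y hy unext hunext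
end
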